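/- Let A ⊂ ℤ^d be a finite set whose convex hull H(A) is a d-simplex, with 0 ∈ B := ex(H(A)). Suppose S(A,B∖{0}) is finite with K := K(A,B∖{0}) = max_{u ∈ S(A,B∖{0})} N_A(u), and fix a_0 ∈ A. Then for every integer N ≥ (d+1)(K−1)+1 the structure equation (∗) holds: NA = (N·H(A) ∩ (N·a_0 + Λ_{A−A})) ∖ ⋃_{b ∈ B} (N·b − E(b−A)). -/

import Mathlib

open Pointwise MeasureTheory

noncomputable section

/-- Embedding of integer vectors into real vectors. -/
def emb (d : ℕ) : (Fin d → ℤ) → (Fin d → ℝ) := fun x i => (x i : ℝ)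

/-- The `N`-fold sumset `NA` (with `0·A = {0}`). -/
def nfold (d : ℕ) (A : Set (Fin d → ℤ)) (N : ℕ) : Set (Fin d → ℤ) :=
  {x | ∃ f : Fin N → (Fin d → ℤ), (∀ i, f i ∈ A) ∧ x = ∑ i, f i}

/-- `P(A) = ⋃_{N ≥ 1} NA`. -/
def PA (d : ℕ) (A : Set (Fin d → ℤ)) : Set (Fin d → ℤ) :=
  ⋃ N ∈ Set.Ici 1, nfold d A N

/-- The width `w(A) = max_{a₁,a₂ ∈ A} ‖a₁ - a₂‖_∞`. -/
def width (d : ℕ) (A : Finset (Fin d → ℤ)) : ℕ :=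
  (A ×ˢ A).sup fun p => Finset.univ.sup fun i => (p.1 i - p.2 i).natAbs

/-- The convex hull `H(A)` in `ℝ^d`. -/
def hull (d : ℕ) (A : Finset (Fin d → ℤ)) : Set (Fin d → ℝ) :=
  convexHull ℝ (emb d '' ↑A)

/-- The cone `C_B = {∑_{b ∈ B} c_b b : c_b ≥ 0}` generated by `B`. -/
def cone (d : ℕ) (B : Finset (Fin d → ℤ)) : Set (Fin d → ℝ) :=
  {x | ∃ c : (Fin d → ℤ) → ℝ, (∀ a, 0 ≤ c a) ∧ x = ∑ a ∈ B, c a • emb d a}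

/-- The lattice (subgroup of `ℤ^d`) generated by a set `S`. -/
def latt (d : ℕ) (S : Set (Fin d → ℤ)) : AddSubgroup (Fin d → ℤ) :=
  AddSubgroup.closure S

/-- The exceptional set `E(A) = (C_A ∩ Λ_A) ∖ P(A)`, viewed inside `ℤ^d`. -/
def excep (d : ℕ) (A : Finset (Fin d → ℤ)) : Set (Fin d → ℤ) :=
  {x | emb d x ∈ cone d A ∧ x ∈ latt d ↑A ∧ x ∉ PA d ↑A}

/-- The set of (lattice) extreme points of `H(A)`: those `p` with `emb p ∈ H(A)` such that
some `v ∈ span ℝ (A - A)`, `v ≠ 0`, satisfies `⟨v,x⟩ > ⟨v,p⟩` for all `x ∈ H(A) ∖ {p}`. -/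
def exP (d : ℕ) (A : Finset (Fin d → ℤ)) : Set (Fin d → ℤ) :=
  {p | emb d p ∈ hull d A ∧
    ∃ v ∈ Submodule.span ℝ (emb d '' ((A : Set (Fin d → ℤ)) - (A : Set (Fin d → ℤ)))),
      v ≠ (0 : Fin d → ℝ) ∧
      ∀ x ∈ hull d A, x ≠ emb d p → (∑ i, v i * emb d p i) < ∑ i, v i * x i}

/-- The structure equation
`NA = (N·H(A) ∩ (N·a₀ + Λ_{A-A})) ∖ ⋃_{a ∈ ex(H(A))} (N·a - E(a - A))`. -/
def structEq (d : ℕ) (A : Finset (Fin d → ℤ)) (a0 : Fin d → ℤ) (N : ℕ) : Prop :=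
  emb d '' nfold d ↑A N =
    ((N : ℝ) • hull d A ∩
      emb d '' (({N • a0} : Set (Fin d → ℤ)) +
        (latt d ((A : Set (Fin d → ℤ)) - (A : Set (Fin d → ℤ))) : Set (Fin d → ℤ)))) \
    ⋃ a ∈ exP d A,
      emb d '' (({N • a} : Set (Fin d → ℤ)) - excep d (A.image fun y => a - y))

/-- `H(A)` is a `d`-simplex: there is `B ⊆ A` with `|B| = d+1`, `B - B` spanning `ℝ^d`,
and `H(A) = H(B)`. -/
def IsSimplex (d : ℕ) (A : Finset (Fin d → ℤ)) : Prop :=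
  ∃ B ⊆ A, B.card = d + 1 ∧
    Submodule.span ℝ (emb d '' ((B : Set (Fin d → ℤ)) - (B : Set (Fin d → ℤ)))) = ⊤ ∧
    hull d B = hull d A

/-- `N_A(v)`: the minimal positive `N` with `v ∈ NA`, and `N_A(0) = 0`. -/
def NAfn (d : ℕ) (A : Set (Fin d → ℤ)) (v : Fin d → ℤ) : ℕ :=
  if v = 0 then 0 else sInf {N : ℕ | 0 < N ∧ v ∈ nfold d A N}

/-- The set `S(A,B)` of `B`-minimal elements. -/
def Smin (d : ℕ) (A B : Set (Fin d → ℤ)) : Set (Fin d → ℤ) :=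
  {0} ∪ {u | u ∈ PA d A ∧ u ≠ 0 ∧
    ∀ f : Fin (NAfn d A u) → (Fin d → ℤ), (∀ i, f i ∈ A) → u = ∑ i, f i →
      ∀ i, f i ∉ B ∪ ({0} : Set (Fin d → ℤ))}

/-!
Write `x ∈ N • H(A)` in barycentric coordinates `τ_b` (`b ∈ B`, `∑ τ_b = N`) and pick a vertex `c`
with `(d + 1) τ_c ≥ N`. The hypotheses put `u = N c - x` in `C_{c-A} ∩ Λ_{c-A}` but not in
`E(c - A)`, so `u ∈ P(c - A)`. Among the representations of `u` by elements of `c - A`, take one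
with the fewest summands outside `c - B`. Reflected back to `A`, those `m` summands add up to an
element `s` with `N_A(s) = m` whose minimal representations avoid `B`: otherwise, padding with
`c = c - 0`, the representation of `u` could be improved. Hence `s ∈ S(A, B ∖ {0})` and `m ≤ K`.
The linear part of the barycentric coordinate at `c` is `1` on every nonzero `c - b`, nonnegative
on `c - A`, and equals `N - τ_c` at `u`; so `u` is a sum of at most `N - τ_c + K < N + 1` nonzero
elements of `c - A`, and padding with `c` gives `x ∈ NA`. The other inclusion is direct, and
`ex(H(A)) = B` because `H(A)` is a simplex.
-/

lemma mem_singleton_add_iff {G : Type*} [AddCommGroup G] {a x : G} {S : Set G} :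
    x ∈ ({a} : Set G) + S ↔ x - a ∈ S := by
  rw [Set.singleton_add]
  exact ⟨fun ⟨s, hs, h⟩ => by rwa [← h, add_sub_cancel_left],
    fun h => ⟨x - a, h, add_sub_cancel a x⟩⟩

lemma mem_singleton_sub_iff {G : Type*} [AddCommGroup G] {a x : G} {S : Set G} :
    x ∈ ({a} : Set G) - S ↔ a - x ∈ S := by
  rw [Set.singleton_sub]
  exact ⟨fun ⟨s, hs, h⟩ => by rwa [← h, sub_sub_cancel], fun h => ⟨a - x, h, sub_sub_cancel a x⟩⟩

section AffineBasis

variable {ι E : Type*} [AddCommGroup E] [Module ℝ E] (β : AffineBasis ι ℝ E)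

lemma AffineBasis.coord_linear_sub (i : ι) (x y : E) :
    (β.coord i).linear (x - y) = β.coord i x - β.coord i y := by
  rw [← vsub_eq_sub, AffineMap.linearMap_vsub, vsub_eq_sub]

lemma AffineBasis.coord_le_one_of_mem_convexHull [Fintype ι] {x : E}
    (hx : x ∈ convexHull ℝ (Set.range β)) (i : ι) : β.coord i x ≤ 1 := by
  rw [β.convexHull_eq_nonneg_coord] at hx
  calc β.coord i x ≤ ∑ j, β.coord j x :=
        Finset.single_le_sum (fun j _ => hx j) (Finset.mem_univ i)
    _ = 1 := β.sum_coord_apply_eq_one x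

lemma AffineBasis.coord_lt_one_of_mem_convexHull [Fintype ι] {x : E}
    (hx : x ∈ convexHull ℝ (Set.range β)) {i : ι} (hxi : x ≠ β i) : β.coord i x < 1 := by
  rw [β.convexHull_eq_nonneg_coord] at hx
  obtain ⟨j, hji, hj⟩ : ∃ j, j ≠ i ∧ β.coord j x ≠ 0 := by
    by_contra! h
    refine hxi (β.ext_elem fun j => ?_)
    rcases eq_or_ne j i with rfl | hj
    · rw [β.coord_apply_eq, ← β.sum_coord_apply_eq_one x,
        Finset.sum_eq_single j (fun k _ hk => h k hk) (by simp)]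
    · rw [h j hj, β.coord_apply_ne hj]
  calc β.coord i x < ∑ k, β.coord k x :=
        Finset.single_lt_sum hji (Finset.mem_univ i) (Finset.mem_univ j)
          ((hx j).lt_of_ne hj.symm) fun k _ _ => hx k
    _ = 1 := β.sum_coord_apply_eq_one x

lemma AffineBasis.exists_one_le_card_mul_coord [Fintype ι] [Nonempty ι] (x : E) :
    ∃ i, 1 ≤ Fintype.card ι * β.coord i x := by
  obtain ⟨i, -, hi⟩ := Finset.exists_le_of_sum_le Finset.univ_nonempty
    (f := fun _ => (Fintype.card ι : ℝ)⁻¹) (g := fun i => β.coord i x)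
    (by simp [β.sum_coord_apply_eq_one])
  have hcard : (0 : ℝ) < Fintype.card ι := Nat.cast_pos.2 Fintype.card_pos
  refine ⟨i, ?_⟩
  calc 1 = Fintype.card ι * (Fintype.card ι : ℝ)⁻¹ := (mul_inv_cancel₀ hcard.ne').symm
    _ ≤ Fintype.card ι * β.coord i x := by gcongr

end AffineBasis

variable {d : ℕ}

def embHom (d : ℕ) : (Fin d → ℤ) →+ (Fin d → ℝ) := (Int.castAddHom ℝ).compLeft (Fin d)

lemma coe_embHom : ⇑(embHom d) = emb d := rfl

lemma emb_injective : Function.Injective (emb d) := fun _ _ h =>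
  funext fun i => Int.cast_injective (congrFun h i)

@[simp] lemma emb_zero : emb d 0 = 0 := map_zero (embHom d)

lemma emb_add (x y : Fin d → ℤ) : emb d (x + y) = emb d x + emb d y := map_add (embHom d) x y

lemma emb_sub (x y : Fin d → ℤ) : emb d (x - y) = emb d x - emb d y := map_sub (embHom d) x y

lemma emb_nsmul (n : ℕ) (x : Fin d → ℤ) : emb d (n • x) = (n : ℝ) • emb d x := by
  rw [← coe_embHom, map_nsmul, Nat.cast_smul_eq_nsmul]

lemma emb_sum {ι : Type*} (s : Finset ι) (f : ι → Fin d → ℤ) :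
    emb d (∑ i ∈ s, f i) = ∑ i ∈ s, emb d (f i) := map_sum (embHom d) f s

lemma mem_nfold_iff {A : Set (Fin d → ℤ)} {N : ℕ} {x : Fin d → ℤ} :
    x ∈ nfold d A N ↔
      ∃ R : Multiset (Fin d → ℤ), Multiset.card R = N ∧ (∀ z ∈ R, z ∈ A) ∧ R.sum = x := by
  constructor
  · rintro ⟨f, hf, rfl⟩
    refine ⟨Finset.univ.val.map f, by simp, ?_, rfl⟩
    simpa using fun i => hf i
  · rintro ⟨R, rfl, hRA, rfl⟩
    have hlen : R.toList.length = Multiset.card R := Multiset.length_toList R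
    refine ⟨fun i => R.toList[Fin.cast hlen.symm i], fun i => hRA _ ?_, ?_⟩
    · exact Multiset.mem_toList.1 (List.getElem_mem _)
    · rw [← Multiset.sum_toList, ← Fin.sum_univ_getElem R.toList]
      exact Fintype.sum_equiv (finCongr hlen) _ _ fun i => rfl

lemma mem_nfold_zero {A : Set (Fin d → ℤ)} {x : Fin d → ℤ} : x ∈ nfold d A 0 ↔ x = 0 := by
  constructor
  · rintro ⟨f, -, rfl⟩
    exact Finset.sum_of_isEmpty _
  · rintro rfl
    exact ⟨Fin.elim0, fun i => i.elim0, (Finset.sum_of_isEmpty _).symm⟩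

lemma mem_PA_of_mem_nfold {A : Set (Fin d → ℤ)} {N : ℕ} {x : Fin d → ℤ} (hN : 0 < N)
    (hx : x ∈ nfold d A N) : x ∈ PA d A :=
  Set.mem_biUnion (Set.mem_Ici.2 hN) hx

lemma sum_map_const_sub (c : Fin d → ℤ) (R : Multiset (Fin d → ℤ)) :
    (R.map (c - ·)).sum = Multiset.card R • c - R.sum := by
  rw [Multiset.sum_map_sub, Multiset.map_const', Multiset.sum_replicate, Multiset.map_id']

lemma nsmul_sub_sum_mem_nfold {A : Set (Fin d → ℤ)} {c : Fin d → ℤ} (hc : c ∈ A)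
    {R : Multiset (Fin d → ℤ)} (hR : ∀ z ∈ R, c - z ∈ A) {N : ℕ} (hN : Multiset.card R ≤ N) :
    N • c - R.sum ∈ nfold d A N := by
  refine mem_nfold_iff.2 ⟨R.map (c - ·) + Multiset.replicate (N - Multiset.card R) c,
    by simp only [Multiset.card_add, Multiset.card_map, Multiset.card_replicate]; omega, ?_, ?_⟩
  · simp only [Multiset.mem_add, Multiset.mem_map, Multiset.mem_replicate]
    rintro z (⟨y, hy, rfl⟩ | ⟨-, rfl⟩)
    exacts [hR y hy, hc]
  · rw [Multiset.sum_add, sum_map_const_sub, Multiset.sum_replicate, sub_add_eq_add_sub,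
      ← add_nsmul, Nat.add_sub_cancel' hN]

lemma NAfn_le {A : Set (Fin d → ℤ)} {N : ℕ} {x : Fin d → ℤ} (hN : 0 < N)
    (hx : x ∈ nfold d A N) : NAfn d A x ≤ N := by
  unfold NAfn
  split_ifs
  exacts [Nat.zero_le N, Nat.sInf_le ⟨hN, hx⟩]

lemma mem_nfold_NAfn {A : Set (Fin d → ℤ)} {x : Fin d → ℤ} (hx : x ∈ PA d A) :
    x ∈ nfold d A (NAfn d A x) := by
  unfold NAfn
  split_ifs with h0
  · exact h0 ▸ mem_nfold_zero.2 rfl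
  · obtain ⟨N, hN, hxN⟩ := Set.mem_iUnion₂.1 hx
    exact (Nat.sInf_mem (s := {N | 0 < N ∧ x ∈ nfold d A N}) ⟨N, hN, hxN⟩).2

lemma sum_filter_ne_zero (R : Multiset (Fin d → ℤ)) : (R.filter (· ≠ 0)).sum = R.sum := by
  conv_rhs => rw [← Multiset.filter_add_not (· ≠ 0) R, Multiset.sum_add]
  rw [Multiset.sum_eq_zero fun x hx => not_not.1 (Multiset.mem_filter.1 hx).2, add_zero]

lemma mem_Smin_of_forall_rep {A B : Set (Fin d → ℤ)} (h0B : (0 : Fin d → ℤ) ∈ B) {m : ℕ}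
    {s : Fin d → ℤ} (hs : s ∈ nfold d A m)
    (hrep : ∀ h : Multiset (Fin d → ℤ), (∀ a ∈ h, a ∈ A) → h.sum = s → Multiset.card h ≤ m →
      Multiset.card h = m ∧ ∀ a ∈ h, a ∉ B) :
    s ∈ Smin d A (B \ {0}) ∧ NAfn d A s = m := by
  rcases m.eq_zero_or_pos with rfl | hm
  · obtain rfl := mem_nfold_zero.1 hs
    exact ⟨Or.inl rfl, if_pos rfl⟩
  have hs0 : s ≠ 0 := by
    rintro rfl
    exact hm.ne (hrep 0 (by simp) rfl (Nat.zero_le _)).1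
  have hsP : s ∈ PA d A := mem_PA_of_mem_nfold hm hs
  obtain ⟨R, hRcard, hRA, hRs⟩ := mem_nfold_iff.1 (mem_nfold_NAfn hsP)
  have hNs : NAfn d A s = m := by
    rw [← hRcard]
    exact (hrep R hRA hRs (hRcard ▸ NAfn_le hm hs)).1
  refine ⟨Or.inr ⟨hsP, hs0, fun f hfA hfs i hfi => ?_⟩, hNs⟩
  refine (hrep (Finset.univ.val.map f) (by simpa using hfA) hfs.symm (by simp [hNs])).2 (f i)
    (by simp) ?_
  rcases hfi with ⟨hfi, -⟩ | hfi
  exacts [hfi, (Set.mem_singleton_iff.1 hfi) ▸ h0B]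

lemma exists_padded_rep {A B : Finset (Fin d → ℤ)} (h0A : (0 : Fin d → ℤ) ∈ A)
    (h0B : (0 : Fin d → ℤ) ∈ B) (c : Fin d → ℤ) {V h : Multiset (Fin d → ℤ)}
    (hV : ∀ z ∈ V, c - z ∈ A) (hh : ∀ a ∈ h, a ∈ A) {m : ℕ} (hm : Multiset.card h ≤ m) :
    ∃ R : Multiset (Fin d → ℤ), (∀ z ∈ R, c - z ∈ A) ∧ R.sum = V.sum + (m • c - h.sum) ∧
      R.countP (fun z => c - z ∉ B) = V.countP (fun z => c - z ∉ B) + h.countP (· ∉ B) := by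
  refine ⟨V + h.map (c - ·) + Multiset.replicate (m - Multiset.card h) c, ?_, ?_, ?_⟩
  · simp only [Multiset.mem_add, Multiset.mem_map, Multiset.mem_replicate]
    rintro z ((hz | ⟨a, ha, rfl⟩) | ⟨-, rfl⟩)
    · exact hV z hz
    · simpa using hh a ha
    · simpa using h0A
  · rw [Multiset.sum_add, Multiset.sum_add, sum_map_const_sub, Multiset.sum_replicate, add_assoc,
      sub_add_eq_add_sub, ← add_nsmul, Nat.add_sub_cancel' hm]
  · have hc : (Multiset.replicate (m - Multiset.card h) c).countP (fun z => c - z ∉ B) = 0 :=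
      Multiset.countP_eq_zero.2 fun z hz => by simp [Multiset.eq_of_mem_replicate hz, h0B]
    rw [Multiset.countP_add, Multiset.countP_add, hc, add_zero, Multiset.countP_map]
    simp only [sub_sub_cancel, Multiset.countP_eq_card_filter]

theorem exists_rep_countP_notMem_le {A B : Finset (Fin d → ℤ)} (h0A : (0 : Fin d → ℤ) ∈ A)
    (h0B : (0 : Fin d → ℤ) ∈ B) {K : ℕ} (hK : ∀ s ∈ Smin d ↑A (↑B \ {0}), NAfn d ↑A s ≤ K)
    (c : Fin d → ℤ) {R : Multiset (Fin d → ℤ)} (hR : ∀ z ∈ R, c - z ∈ A) :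
    ∃ R' : Multiset (Fin d → ℤ), (∀ z ∈ R', c - z ∈ A) ∧ R'.sum = R.sum ∧
      R'.countP (fun z => c - z ∉ B) ≤ K := by
  set reps := {R' : Multiset (Fin d → ℤ) | (∀ z ∈ R', c - z ∈ A) ∧ R'.sum = R.sum}
  set cnt := fun R' : Multiset (Fin d → ℤ) => R'.countP (fun z => c - z ∉ B)
  obtain ⟨R', ⟨hR'A, hR'sum⟩, hmin⟩ : ∃ R' ∈ reps, ∀ R'' ∈ reps, cnt R' ≤ cnt R'' :=
    ⟨_, Function.argminOn_mem cnt reps ⟨R, hR, rfl⟩, fun _ h => Function.argminOn_le cnt reps h⟩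
  refine ⟨R', hR'A, hR'sum, ?_⟩
  set V := R'.filter (fun z => c - z ∈ B)
  set W := R'.filter (fun z => c - z ∉ B)
  set m := Multiset.card W
  set s := (W.map (c - ·)).sum
  have hs : s ∈ nfold d A m := by
    refine mem_nfold_iff.2 ⟨W.map (c - ·), Multiset.card_map _ _, ?_, rfl⟩
    intro y hy
    obtain ⟨z, hz, rfl⟩ := Multiset.mem_map.1 hy
    simpa using hR'A z (Multiset.mem_of_mem_filter hz)
  have hVW : V.sum + (m • c - s) = R.sum := by
    rw [show s = m • c - W.sum from sum_map_const_sub c W, sub_sub_cancel, ← hR'sum,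
      ← Multiset.filter_add_not (fun z => c - z ∈ B) R', Multiset.sum_add]
  have hV : V.countP (fun z => c - z ∉ B) = 0 :=
    Multiset.countP_eq_zero.2 fun z hz => not_not.2 (Multiset.mem_filter.1 hz).2
  have hrep : ∀ h : Multiset (Fin d → ℤ), (∀ a ∈ h, a ∈ A) → h.sum = s →
      Multiset.card h ≤ m → Multiset.card h = m ∧ ∀ a ∈ h, a ∉ B := by
    intro h hhA hhs hle
    obtain ⟨R'', hR''A, hR''sum, hR''cnt⟩ := exists_padded_rep h0A h0B c (V := V)
      (fun z hz => hR'A z (Multiset.mem_of_mem_filter hz)) hhA hle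
    have h1 : m ≤ h.countP (· ∉ B) :=
      calc m = cnt R' := (Multiset.countP_eq_card_filter _ _).symm
        _ ≤ cnt R'' := hmin R'' ⟨hR''A, by rw [hR''sum, hhs, hVW]⟩
        _ = h.countP (· ∉ B) := hR''cnt.trans (by rw [hV, zero_add])
    have h2 := Multiset.countP_le_card (· ∉ B) h
    exact ⟨by omega, Multiset.countP_eq_card.1 (by omega)⟩
  obtain ⟨hsS, hNs⟩ := mem_Smin_of_forall_rep h0B hs hrep
  calc cnt R' = m := Multiset.countP_eq_card_filter _ _
    _ = NAfn d ↑A s := hNs.symm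
    _ ≤ K := hK s hsS

lemma mem_image_sub_iff {A : Finset (Fin d → ℤ)} {c z : Fin d → ℤ} :
    z ∈ A.image (c - ·) ↔ c - z ∈ A := by
  refine ⟨fun hz => ?_, fun hz => Finset.mem_image.2 ⟨c - z, hz, sub_sub_cancel c z⟩⟩
  obtain ⟨a, ha, rfl⟩ := Finset.mem_image.1 hz
  rwa [sub_sub_cancel]

lemma sum_smul_mem_cone {ι : Type*} {S : Finset (Fin d → ℤ)} (s : Finset ι) {t : ι → ℝ}
    {y : ι → Fin d → ℤ} (ht : ∀ i ∈ s, 0 ≤ t i) (hy : ∀ i ∈ s, y i ∈ S) :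
    ∑ i ∈ s, t i • emb d (y i) ∈ cone d S := by
  refine ⟨fun z => ∑ i ∈ s with y i = z, t i,
    fun z => Finset.sum_nonneg fun i hi => ht i (Finset.mem_filter.1 hi).1, ?_⟩
  rw [← Finset.sum_fiberwise_of_maps_to hy]
  refine Finset.sum_congr rfl fun z _ => ?_
  rw [Finset.sum_smul]
  exact Finset.sum_congr rfl fun i hi => by rw [(Finset.mem_filter.1 hi).2]

lemma latt_sub_le_latt_image (A : Finset (Fin d → ℤ)) (c : Fin d → ℤ) :
    latt d ((A : Set (Fin d → ℤ)) - (A : Set (Fin d → ℤ))) ≤ latt d ↑(A.image (c - ·)) := by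
  refine AddSubgroup.closure_le _ |>.2 ?_
  rintro _ ⟨a, ha, a', ha', rfl⟩
  have hmem : ∀ y ∈ A, c - y ∈ latt d ↑(A.image (c - ·)) := fun y hy =>
    AddSubgroup.subset_closure (Finset.mem_coe.2 (Finset.mem_image_of_mem _ hy))
  simpa using sub_mem (hmem a' ha') (hmem a ha)

lemma nsmul_sub_mem_latt_image {A : Finset (Fin d → ℤ)} {a0 c x : Fin d → ℤ} {N : ℕ}
    (ha0 : a0 ∈ A) (hx : x - N • a0 ∈ latt d ((A : Set (Fin d → ℤ)) - (A : Set (Fin d → ℤ)))) :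
    N • c - x ∈ latt d ↑(A.image (c - ·)) := by
  rw [show N • c - x = N • (c - a0) - (x - N • a0) by rw [smul_sub]; abel]
  exact sub_mem (nsmul_mem (AddSubgroup.subset_closure
    (Finset.mem_coe.2 (Finset.mem_image_of_mem _ ha0))) N) (latt_sub_le_latt_image A c hx)

lemma emb_mem_smul_hull {A : Finset (Fin d → ℤ)} (hA : A.Nonempty) {N : ℕ} {x : Fin d → ℤ}
    (hx : x ∈ nfold d ↑A N) : emb d x ∈ (N : ℝ) • hull d A := by
  obtain ⟨f, hf, rfl⟩ := hx
  rcases N.eq_zero_or_pos with rfl | hN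
  · obtain ⟨a, ha⟩ := hA
    rw [show emb d (∑ i, f i) = ((0 : ℕ) : ℝ) • emb d a by simp]
    exact Set.smul_mem_smul_set (subset_convexHull ℝ _ ⟨a, ha, rfl⟩)
  have havg : ∑ i, (N : ℝ)⁻¹ • emb d (f i) ∈ hull d A :=
    (convex_convexHull ℝ _).sum_mem (fun _ _ => by positivity) (by simp [hN.ne'])
      fun i _ => subset_convexHull ℝ _ ⟨f i, hf i, rfl⟩
  convert Set.smul_mem_smul_set (a := (N : ℝ)) havg using 1
  rw [Finset.smul_sum, emb_sum]
  simp [smul_smul, hN.ne']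

lemma sub_nsmul_mem_latt {A : Finset (Fin d → ℤ)} {N : ℕ} {x : Fin d → ℤ}
    (hx : x ∈ nfold d ↑A N) {a0 : Fin d → ℤ} (ha0 : a0 ∈ A) :
    x - N • a0 ∈ latt d ((A : Set (Fin d → ℤ)) - (A : Set (Fin d → ℤ))) := by
  obtain ⟨f, hf, rfl⟩ := hx
  rw [show ∑ i, f i - N • a0 = ∑ i, (f i - a0) by simp [Finset.sum_sub_distrib]]
  exact AddSubgroup.sum_mem _ fun i _ => AddSubgroup.subset_closure ⟨f i, hf i, a0, ha0, rfl⟩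

lemma nsmul_sub_mem_PA {A : Finset (Fin d → ℤ)} {N : ℕ} {x : Fin d → ℤ}
    (hx : x ∈ nfold d ↑A N) {c : Fin d → ℤ} (hc : c ∈ A) :
    N • c - x ∈ PA d ↑(A.image (c - ·)) := by
  obtain ⟨R, rfl, hRA, rfl⟩ := mem_nfold_iff.1 hx
  rcases (Multiset.card R).eq_zero_or_pos with hR | hR
  · rw [hR, Multiset.card_eq_zero.1 hR, zero_smul, Multiset.sum_zero, sub_zero]
    refine mem_PA_of_mem_nfold one_pos (mem_nfold_iff.2 ⟨{0}, rfl, fun z hz => ?_,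
      Multiset.sum_singleton 0⟩)
    rw [Multiset.mem_singleton.1 hz, Finset.mem_coe, mem_image_sub_iff, sub_zero]
    exact hc
  refine mem_PA_of_mem_nfold hR (mem_nfold_iff.2 ⟨R.map (c - ·), Multiset.card_map _ _,
    fun z hz => ?_, sum_map_const_sub c R⟩)
  obtain ⟨y, hy, rfl⟩ := Multiset.mem_map.1 hz
  rw [Finset.mem_coe, mem_image_sub_iff, sub_sub_cancel]
  exact hRA y hy

lemma structEq_of_forall_mem_nfold_iff {A : Finset (Fin d → ℤ)} {a0 : Fin d → ℤ} {N : ℕ}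
    (h : ∀ x, x ∈ nfold d ↑A N ↔ emb d x ∈ (N : ℝ) • hull d A ∧
      x - N • a0 ∈ latt d ((A : Set (Fin d → ℤ)) - (A : Set (Fin d → ℤ))) ∧
      ∀ a ∈ exP d A, N • a - x ∉ excep d (A.image (a - ·))) :
    structEq d A a0 N := by
  ext y
  constructor
  · rintro ⟨x, hx, rfl⟩
    obtain ⟨hH, hL, hE⟩ := (h x).1 hx
    refine ⟨⟨hH, emb_injective.mem_set_image.2 (mem_singleton_add_iff.2 hL)⟩, fun hy => ?_⟩
    obtain ⟨a, ha, hxa⟩ := Set.mem_iUnion₂.1 hy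
    exact hE a ha (mem_singleton_sub_iff.1 (emb_injective.mem_set_image.1 hxa))
  · rintro ⟨⟨hH, x, hx, rfl⟩, hE⟩
    refine ⟨x, (h x).2 ⟨hH, mem_singleton_add_iff.1 hx, fun a ha hxa => hE ?_⟩, rfl⟩
    exact Set.mem_iUnion₂.2 ⟨a, ha, emb_injective.mem_set_image.2 (mem_singleton_sub_iff.2 hxa)⟩

lemma vectorSpan_image_emb (S : Set (Fin d → ℤ)) :
    vectorSpan ℝ (emb d '' S) = Submodule.span ℝ (emb d '' (S - S)) := by
  rw [vectorSpan_def, ← coe_embHom, Set.image_sub]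
  rfl

lemma range_emb_coe (B : Finset (Fin d → ℤ)) : Set.range (fun b : B => emb d b) = emb d '' B := by
  rw [Set.range_comp' (emb d) Subtype.val, Subtype.range_coe]

def vertexBasis (B : Finset (Fin d → ℤ)) (hcard : B.card = d + 1)
    (hspan : Submodule.span ℝ (emb d '' ((B : Set (Fin d → ℤ)) - (B : Set (Fin d → ℤ)))) = ⊤) :
    AffineBasis B ℝ (Fin d → ℝ) :=
  have htop : vectorSpan ℝ (Set.range (fun b : B => emb d b)) = ⊤ := by
    rw [range_emb_coe, vectorSpan_image_emb, hspan]
  ⟨fun b => emb d b,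
    (affineIndependent_iff_finrank_vectorSpan_eq ℝ _ (by simpa using hcard)).2
      (by rw [htop, finrank_top, Module.finrank_fin_fun]),
    (AffineSubspace.affineSpan_eq_top_iff_vectorSpan_eq_top_of_nonempty ℝ _ _
      (Set.range_nonempty_iff_nonempty.2 (Finset.card_pos.1 (by omega)).to_subtype)).2 htop⟩

lemma vertexBasis_apply {B : Finset (Fin d → ℤ)} (hcard : B.card = d + 1)
    (hspan : Submodule.span ℝ (emb d '' ((B : Set (Fin d → ℤ)) - (B : Set (Fin d → ℤ)))) = ⊤)
    (b : B) : vertexBasis B hcard hspan b = emb d b := rfl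

lemma range_vertexBasis {B : Finset (Fin d → ℤ)} (hcard : B.card = d + 1)
    (hspan : Submodule.span ℝ (emb d '' ((B : Set (Fin d → ℤ)) - (B : Set (Fin d → ℤ)))) = ⊤) :
    Set.range (vertexBasis B hcard hspan) = emb d '' B :=
  range_emb_coe B

lemma pos_of_mem_exP {A : Finset (Fin d → ℤ)} {p : Fin d → ℤ} (hp : p ∈ exP d A) : 0 < d := by
  obtain ⟨-, v, -, hv, -⟩ := hp
  refine Nat.pos_of_ne_zero fun hd => hv ?_
  subst hd
  exact Subsingleton.elim _ _

lemma exP_subset_of_hull_eq {A B : Finset (Fin d → ℤ)} (h : hull d A = hull d B) :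
    exP d A ⊆ B := by
  rintro p ⟨hp, v, -, -, hv⟩
  by_contra hpB
  have hlin : IsLinearMap ℝ fun x : Fin d → ℝ => ∑ i, v i * x i :=
    ⟨fun x y => by simp [mul_add, Finset.sum_add_distrib],
      fun c x => by simp [Finset.mul_sum, mul_left_comm]⟩
  have hsub : hull d B ⊆ {x | ∑ i, v i * emb d p i < ∑ i, v i * x i} := by
    refine convexHull_min ?_ (convex_halfSpace_gt hlin _)
    rintro _ ⟨b, hb, rfl⟩
    exact hv _ (h ▸ subset_convexHull ℝ _ ⟨b, hb, rfl⟩) fun he => hpB (emb_injective he ▸ hb)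
  have hlt : ∑ i, v i * emb d p i < ∑ i, v i * emb d p i := hsub (h ▸ hp)
  exact lt_irrefl _ hlt

lemma subset_exP {A B : Finset (Fin d → ℤ)} [Nontrivial B] (β : AffineBasis B ℝ (Fin d → ℝ))
    (hβ : ∀ b, β b = emb d b) (hhull : hull d A = convexHull ℝ (Set.range β))
    (hspan : Submodule.span ℝ (emb d '' ((A : Set (Fin d → ℤ)) - (A : Set (Fin d → ℤ)))) = ⊤) :
    ↑B ⊆ exP d A := by
  intro b hb
  set v : Fin d → ℝ := fun i => -(β.coord ⟨b, hb⟩).linear fun j => if i = j then 1 else 0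
  have hv : ∀ y, ∑ i, v i * y i = -(β.coord ⟨b, hb⟩).linear y := fun y => by
    rw [(β.coord ⟨b, hb⟩).linear.pi_apply_eq_sum_univ y, ← Finset.sum_neg_distrib]
    simp only [v, smul_eq_mul, mul_neg, mul_comm]
  refine ⟨hhull ▸ subset_convexHull ℝ _ ⟨⟨b, hb⟩, hβ _⟩, v, by rw [hspan]; trivial, ?_,
    fun x hx hxb => ?_⟩
  · intro hv0
    obtain ⟨b', hb'⟩ := exists_ne (⟨b, hb⟩ : B)
    have := hv (β b' - β ⟨b, hb⟩)
    simp only [hv0, Pi.zero_apply, zero_mul, Finset.sum_const_zero, β.coord_linear_sub,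
      β.coord_apply_ne hb'.symm, β.coord_apply_eq] at this
    norm_num at this
  · have hbb : emb d b = β ⟨b, hb⟩ := (hβ ⟨b, hb⟩).symm
    rw [hv, hv, neg_lt_neg_iff, ← sub_neg, ← map_sub, β.coord_linear_sub, hbb, β.coord_apply_eq,
      sub_neg]
    exact β.coord_lt_one_of_mem_convexHull (hhull ▸ hx) (hbb ▸ hxb)

section Simplex

variable {A B : Finset (Fin d → ℤ)} (β : AffineBasis B ℝ (Fin d → ℝ))

lemma card_le_coord_linear_add_countP (hβ : ∀ b, β b = emb d b)
    (hhull : hull d A = convexHull ℝ (Set.range β)) (c : B) {R : Multiset (Fin d → ℤ)}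
    (hR : ∀ z ∈ R, (c : Fin d → ℤ) - z ∈ A ∧ z ≠ 0) :
    (Multiset.card R : ℝ) ≤
      (β.coord c).linear (emb d R.sum) + R.countP (fun z => (c : Fin d → ℤ) - z ∉ B) := by
  induction R using Multiset.induction_on with
  | empty => simp
  | cons z R ih =>
    obtain ⟨hzA, hz0⟩ := hR z (Multiset.mem_cons_self z R)
    have hz : (β.coord c).linear (emb d z) = 1 - β.coord c (emb d (c - z)) := by
      rw [← sub_sub_cancel (c : Fin d → ℤ) z, emb_sub, β.coord_linear_sub, ← hβ,
        β.coord_apply_eq, sub_sub_cancel]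
    have hstep : 1 ≤ (β.coord c).linear (emb d z) + if (c : Fin d → ℤ) - z ∉ B then 1 else 0 := by
      by_cases hzB : (c : Fin d → ℤ) - z ∈ B
      · have hne : (⟨_, hzB⟩ : B) ≠ c := fun h => hz0 (by simpa using congrArg Subtype.val h)
        rw [if_neg (not_not.2 hzB), hz, ← hβ ⟨_, hzB⟩, β.coord_apply_ne hne.symm]
        norm_num
      · have := β.coord_le_one_of_mem_convexHull
          (hhull ▸ subset_convexHull ℝ _ ⟨_, hzA, rfl⟩ : emb d (c - z) ∈ _) c
        rw [if_pos hzB]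
        linarith
    have := ih fun y hy => hR y (Multiset.mem_cons_of_mem hy)
    rw [Multiset.card_cons, Multiset.sum_cons, emb_add, map_add, Multiset.countP_cons]
    push_cast
    linarith

lemma smul_sub_mem_cone (hβ : ∀ b, β b = emb d b) (hBA : B ⊆ A) (c : B) {z : Fin d → ℝ}
    (hz : z ∈ convexHull ℝ (Set.range β)) {t : ℝ} (ht : 0 ≤ t) :
    t • (β c - z) ∈ cone d (A.image ((c : Fin d → ℤ) - ·)) := by
  rw [β.convexHull_eq_nonneg_coord] at hz
  have hcomb : ∑ b, β.coord b z • (β c - β b) = β c - z := by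
    simp_rw [smul_sub]
    rw [Finset.sum_sub_distrib, ← Finset.sum_smul, β.sum_coord_apply_eq_one, one_smul,
      β.linear_combination_coord_eq_self]
  rw [← hcomb, Finset.smul_sum]
  simp_rw [smul_smul, hβ, ← emb_sub]
  exact sum_smul_mem_cone _ (fun b _ => mul_nonneg ht (hz b))
    fun b _ => mem_image_sub_iff.2 (by simpa using hBA b.2)

lemma mem_nfold_of_nsmul_sub_mem_PA (hβ : ∀ b, β b = emb d b)
    (hhull : hull d A = convexHull ℝ (Set.range β)) (hBA : B ⊆ A)
    (h0B : (0 : Fin d → ℤ) ∈ B) {K : ℕ} (hK : ∀ s ∈ Smin d ↑A (↑B \ {0}), NAfn d ↑A s ≤ K)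
    {N : ℕ} (hN : (B.card : ℤ) * (K - 1) + 1 ≤ N) {c : B} {z : Fin d → ℝ}
    (hc : 1 ≤ B.card * β.coord c z) {x : Fin d → ℤ} (hxz : (N : ℝ) • z = emb d x)
    (hu : N • (c : Fin d → ℤ) - x ∈ PA d ↑(A.image ((c : Fin d → ℤ) - ·))) :
    x ∈ nfold d ↑A N := by
  obtain ⟨M, -, huM⟩ := Set.mem_iUnion₂.1 hu
  obtain ⟨R, -, hRA, hRsum⟩ := mem_nfold_iff.1 huM
  obtain ⟨R', hR'A, hR'sum, hR'K⟩ := exists_rep_countP_notMem_le (hBA h0B) h0B hK c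
    fun z hz => mem_image_sub_iff.1 (hRA z hz)
  set R₀ := R'.filter (· ≠ 0)
  have hR₀A : ∀ z ∈ R₀, (c : Fin d → ℤ) - z ∈ A :=
    fun z hz => hR'A z (Multiset.mem_of_mem_filter hz)
  have hR₀sum : R₀.sum = N • (c : Fin d → ℤ) - x := by rw [sum_filter_ne_zero, hR'sum, hRsum]
  have hlen := card_le_coord_linear_add_countP β hβ hhull c (R := R₀)
    fun z hz => ⟨hR₀A z hz, (Multiset.mem_filter.1 hz).2⟩
  have hcount : (R₀.countP (fun z => (c : Fin d → ℤ) - z ∉ B) : ℝ) ≤ K := by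
    exact_mod_cast (Multiset.countP_le_of_le _ (Multiset.filter_le _ _)).trans hR'K
  have hlin : (β.coord c).linear (emb d R₀.sum) = N * (1 - β.coord c z) := by
    rw [hR₀sum, emb_sub, emb_nsmul, ← hxz, ← hβ, ← smul_sub, map_smul, β.coord_linear_sub,
      β.coord_apply_eq, smul_eq_mul]
  have hNR : (B.card : ℝ) * (K - 1) + 1 ≤ N := by exact_mod_cast hN
  have hcard : (Multiset.card R₀ : ℝ) < N + 1 := by nlinarith
  have := nsmul_sub_sum_mem_nfold (hBA c.2) hR₀A (Nat.lt_succ_iff.1 (by exact_mod_cast hcard))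
  rwa [hR₀sum, sub_sub_cancel] at this

theorem mem_nfold_of_forall_notMem_excep (hβ : ∀ b, β b = emb d b)
    (hhull : hull d A = convexHull ℝ (Set.range β)) (hBA : B ⊆ A)
    (h0B : (0 : Fin d → ℤ) ∈ B) {K : ℕ} (hK : ∀ s ∈ Smin d ↑A (↑B \ {0}), NAfn d ↑A s ≤ K)
    {a0 : Fin d → ℤ} (ha0 : a0 ∈ A) {N : ℕ} (hN : (B.card : ℤ) * (K - 1) + 1 ≤ N)
    {x : Fin d → ℤ} (hxH : emb d x ∈ (N : ℝ) • hull d A)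
    (hxL : x - N • a0 ∈ latt d ((A : Set (Fin d → ℤ)) - (A : Set (Fin d → ℤ))))
    (hxE : ∀ c ∈ B, N • c - x ∉ excep d (A.image (c - ·))) : x ∈ nfold d ↑A N := by
  obtain ⟨z, hz, hxz : (N : ℝ) • z = emb d x⟩ := hxH
  rcases N.eq_zero_or_pos with rfl | hNpos
  · simp only [Nat.cast_zero, zero_smul] at hxz
    exact mem_nfold_zero.2 (emb_injective (hxz.symm.trans emb_zero.symm))
  have : Nonempty B := ⟨⟨0, h0B⟩⟩
  obtain ⟨c, hc⟩ := β.exists_one_le_card_mul_coord z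
  rw [Fintype.card_coe] at hc
  rw [hhull] at hz
  refine mem_nfold_of_nsmul_sub_mem_PA β hβ hhull hBA h0B hK hN hc hxz ?_
  by_contra hu
  have hemb : emb d (N • (c : Fin d → ℤ) - x) = (N : ℝ) • (β c - z) := by
    rw [emb_sub, emb_nsmul, ← hxz, hβ, smul_sub]
  exact hxE c c.2 ⟨hemb ▸ smul_sub_mem_cone β hβ hBA c hz N.cast_nonneg,
    nsmul_sub_mem_latt_image ha0 hxL, hu⟩

end Simplex

theorem structure_simplex_K_general (d : ℕ) (A : Finset (Fin d → ℤ)) (hsimp : IsSimplex d A)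
    (h0 : (0 : Fin d → ℤ) ∈ exP d A)
    (K : ℕ) (hK : IsGreatest (NAfn d ↑A '' Smin d ↑A (exP d A \ {0})) K)
    (a0 : Fin d → ℤ) (ha0 : a0 ∈ A) :
    ∀ N : ℕ, ((d : ℤ) + 1) * ((K : ℤ) - 1) + 1 ≤ (N : ℤ) → structEq d A a0 N := by
  obtain ⟨B, hBA, hcard, hspan, hhull⟩ := hsimp
  set β := vertexBasis B hcard hspan
  have hhullβ : hull d A = convexHull ℝ (Set.range β) := by
    rw [← hhull, hull, range_vertexBasis]
  have : Nontrivial B :=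
    Fintype.one_lt_card_iff_nontrivial.1 (by simp [hcard, pos_of_mem_exP h0])
  have hspanA : Submodule.span ℝ (emb d '' ((A : Set (Fin d → ℤ)) - (A : Set (Fin d → ℤ)))) = ⊤ :=
    top_unique (hspan ▸ Submodule.span_mono (Set.image_mono (Set.sub_subset_sub hBA hBA)))
  have hexP : exP d A = B := (exP_subset_of_hull_eq hhull.symm).antisymm
    (subset_exP β (vertexBasis_apply hcard hspan) hhullβ hspanA)
  rw [hexP] at h0 hK
  intro N hN
  refine structEq_of_forall_mem_nfold_iff fun x => ⟨fun hx => ?_, fun ⟨hH, hL, hE⟩ => ?_⟩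
  · exact ⟨emb_mem_smul_hull ⟨a0, ha0⟩ hx, sub_nsmul_mem_latt hx ha0,
      fun a ha hE => hE.2.2 (nsmul_sub_mem_PA hx (hBA (hexP.subset ha)))⟩
  · exact mem_nfold_of_forall_notMem_excep β (vertexBasis_apply hcard hspan) hhullβ hBA h0
      (fun s hs => hK.2 ⟨s, hs, rfl⟩) ha0 (by rwa [hcard, Nat.cast_add, Nat.cast_one]) hH hL
      fun c hc => hE c (hexP.symm.subset hc)

/-- Structure theorem for simplices in terms of `K = K(A, B ∖ {0})` where `B = ex(H(A))`:
the structure equation holds for all `N ≥ (d+1)(K-1)+1`. -/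
theorem structure_simplex_K (d : ℕ) (A : Finset (Fin d → ℤ)) (hsimp : IsSimplex d A)
    (h0 : (0 : Fin d → ℤ) ∈ exP d A)
    (hfin : (Smin d ↑A (exP d A \ {0})).Finite)
    (K : ℕ) (hK : IsGreatest (NAfn d ↑A '' Smin d ↑A (exP d A \ {0})) K)
    (a0 : Fin d → ℤ) (ha0 : a0 ∈ A) :
    ∀ N : ℕ, ((d : ℤ) + 1) * ((K : ℤ) - 1) + 1 ≤ (N : ℤ) → structEq d A a0 N :=
  structure_simplex_K_general d A hsimp h0 K hK a0 ha0
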